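/- arXiv:2306.15260 — 2 statements merged into one kernel-verified Lean document; each statement's English description precedes it below -/
import Mathlib

section
/- Let γ > 1, σ ≥ 0, c = 1/γ, and ρ* = (1 − 2/π + σ²)/((2/π)γ). Let λ be a random variable with law μ_c (the Marchenko–Pastur distribution) and d = √λ. For a measurable function f : (0,∞) → (0,∞) with E[λ f(√λ)²] < ∞ and E[f(√λ)²] < ∞, define SNR(f) = (E[d f(d)])² / ( Var[d f(d)] + ρ* E[f(d)²] ). Then for every α > 0, the function f*(x) = √α · x/(x² + ρ*) satisfies SNR(f*) = m/(1 − m) with m = E[λ/(λ + ρ*)], and for every admissible f one has SNR(f) ≤ SNR(f*). -/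
open MeasureTheory Real
open Set

/-- The Marchenko–Pastur density `p_c`. -/
noncomputable def mpDensity (c x : ℝ) : ℝ :=
  Real.sqrt (max (x - (1 - Real.sqrt c) ^ 2) 0 * max ((1 + Real.sqrt c) ^ 2 - x) 0) /
    (2 * Real.pi * c * x)

/-- The Marchenko–Pastur distribution `μ_c` on `(0, ∞)`. -/
noncomputable def mpMeasure (c : ℝ) : Measure ℝ :=
  (volume.restrict (Set.Ioi (0 : ℝ))).withDensity fun x => ENNReal.ofReal (mpDensity c x)

/-- `SNR(f) = (E[d f(d)])² / (Var[d f(d)] + ρ E[f(d)²])` where `d = √λ`, `λ ~ μ_c`. -/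
noncomputable def SNR (c ρ : ℝ) (f : ℝ → ℝ) : ℝ :=
  (∫ x, Real.sqrt x * f (Real.sqrt x) ∂mpMeasure c) ^ 2 /
    (((∫ x, (Real.sqrt x * f (Real.sqrt x)) ^ 2 ∂mpMeasure c) -
        (∫ x, Real.sqrt x * f (Real.sqrt x) ∂mpMeasure c) ^ 2) +
      ρ * ∫ x, f (Real.sqrt x) ^ 2 ∂mpMeasure c)




lemma keyIntegral (A B : ℝ) (hA : 0 < A) (hAB : A < B) :
    ∫ x in A..B, Real.sqrt ((x - A) * (B - x)) / x
      = π * ((A + B) / 2 - Real.sqrt (A * B)) := by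
  have hr0 : (0:ℝ) < B - A := by linarith
  have hB : 0 < B := hA.trans hAB
  have hP : 0 < A * B := mul_pos hA hB
  have hsp0 : 0 < Real.sqrt (A * B) := Real.sqrt_pos.mpr hP
  set F : ℝ → ℝ := fun x =>
    Real.sqrt ((x - A) * (B - x)) + ((A + B) / 2) * Real.arcsin ((2 * x - (A + B)) / (B - A))
      - Real.sqrt (A * B) * Real.arcsin (((A + B) * x - 2 * (A * B)) / ((B - A) * x)) with hF
  have hcont : ContinuousOn F (Icc A B) := by
    apply ContinuousOn.sub
    apply ContinuousOn.add
    · exact (Real.continuous_sqrt.comp (by fun_prop)).continuousOn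
    · exact (continuous_const.mul (Real.continuous_arcsin.comp (by fun_prop))).continuousOn
    · apply ContinuousOn.mul continuousOn_const
      apply Real.continuous_arcsin.comp_continuousOn
      apply ContinuousOn.div (by fun_prop) (by fun_prop)
      intro x hx
      have : 0 < x := lt_of_lt_of_le hA hx.1
      positivity
  have hderiv : ∀ x ∈ Ioo A B, HasDerivAt F (Real.sqrt ((x - A) * (B - x)) / x) x := by
    intro x hx
    have hx0 : 0 < x := hA.trans hx.1
    have hq : 0 < (x - A) * (B - x) := mul_pos (by linarith [hx.1]) (by linarith [hx.2])
    have hsq : 0 < Real.sqrt ((x - A) * (B - x)) := Real.sqrt_pos.mpr hq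
    have hS : Real.sqrt ((x - A) * (B - x)) * Real.sqrt ((x - A) * (B - x))
        = (x - A) * (B - x) := Real.mul_self_sqrt hq.le
    -- term 1
    have h1 : HasDerivAt (fun y => Real.sqrt ((y - A) * (B - y)))
        (((A + B) - 2 * x) / (2 * Real.sqrt ((x - A) * (B - x)))) x := by
      have hpoly : HasDerivAt (fun y : ℝ => (y - A) * (B - y)) ((A + B) - 2 * x) x := by
        have := ((hasDerivAt_id x).sub_const A).mul ((hasDerivAt_id x).const_sub B)
        refine this.congr_deriv (Eq.symm ?_)
        simp only [id_eq]; ring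
      have := (Real.hasDerivAt_sqrt (ne_of_gt hq)).comp x hpoly
      refine this.congr_deriv (Eq.symm ?_)
      field_simp
    -- term 2
    have h2 : HasDerivAt (fun y => ((A + B) / 2) * Real.arcsin ((2 * y - (A + B)) / (B - A)))
        ((A + B) / (2 * Real.sqrt ((x - A) * (B - x)))) x := by
      have hu : HasDerivAt (fun y : ℝ => (2 * y - (A + B)) / (B - A)) (2 / (B - A)) x := by
        have := (((hasDerivAt_id x).const_mul 2).sub_const (A + B)).div_const (B - A)
        refine this.congr_deriv (Eq.symm ?_)
        norm_num
      have hu1 : (2 * x - (A + B)) / (B - A) ≠ -1 := by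
        intro h; rw [div_eq_iff hr0.ne'] at h; nlinarith [hx.1]
      have hu2 : (2 * x - (A + B)) / (B - A) ≠ 1 := by
        intro h; rw [div_eq_iff hr0.ne'] at h; nlinarith [hx.2]
      have harc := (Real.hasDerivAt_arcsin hu1 hu2).comp x hu
      have := harc.const_mul ((A + B) / 2)
      refine this.congr_deriv (Eq.symm ?_)
      have h1u : 1 - ((2 * x - (A + B)) / (B - A)) ^ 2
          = 4 * ((x - A) * (B - x)) / (B - A) ^ 2 := by
        field_simp; ring
      rw [h1u, show (4 : ℝ) * ((x - A) * (B - x)) / (B - A) ^ 2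
          = (2 * Real.sqrt ((x - A) * (B - x)) / (B - A)) ^ 2 by
        rw [div_pow, mul_pow, Real.sq_sqrt hq.le]; norm_num]
      rw [Real.sqrt_sq (by positivity)]
      field_simp
    -- term 3
    have h3 : HasDerivAt
        (fun y => Real.sqrt (A * B) * Real.arcsin (((A + B) * y - 2 * (A * B)) / ((B - A) * y)))
        ((A * B) / (x * Real.sqrt ((x - A) * (B - x)))) x := by
      have hu : HasDerivAt (fun y : ℝ => ((A + B) * y - 2 * (A * B)) / ((B - A) * y))
          (2 * (A * B) / ((B - A) * x ^ 2)) x := by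
        have hnum : HasDerivAt (fun y : ℝ => (A + B) * y - 2 * (A * B)) (A + B) x := by
          simpa using ((hasDerivAt_id x).const_mul (A + B)).sub_const (2 * (A * B))
        have hden : HasDerivAt (fun y : ℝ => (B - A) * y) (B - A) x := by
          simpa using (hasDerivAt_id x).const_mul (B - A)
        have := hnum.div hden (by positivity)
        refine this.congr_deriv (Eq.symm ?_)
        field_simp
        ring
      have hkey : ((B - A) * x) ^ 2 - ((A + B) * x - 2 * (A * B)) ^ 2
          = 4 * (A * B) * ((x - A) * (B - x)) := by ring
      have habs : ((A + B) * x - 2 * (A * B)) ^ 2 < ((B - A) * x) ^ 2 := by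
        nlinarith [mul_pos hP hq]
      have hrx : 0 < (B - A) * x := by positivity
      have hu1 : ((A + B) * x - 2 * (A * B)) / ((B - A) * x) ≠ -1 := by
        intro h; rw [div_eq_iff hrx.ne'] at h; rw [h] at habs; nlinarith
      have hu2 : ((A + B) * x - 2 * (A * B)) / ((B - A) * x) ≠ 1 := by
        intro h; rw [div_eq_iff hrx.ne'] at h; rw [h] at habs; nlinarith
      have harc := (Real.hasDerivAt_arcsin hu1 hu2).comp x hu
      have := harc.const_mul (Real.sqrt (A * B))
      refine this.congr_deriv (Eq.symm ?_)
      have h1u : 1 - (((A + B) * x - 2 * (A * B)) / ((B - A) * x)) ^ 2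
          = 4 * (A * B) * ((x - A) * (B - x)) / ((B - A) * x) ^ 2 := by
        field_simp
        linear_combination hkey
      rw [h1u, show (4 : ℝ) * (A * B) * ((x - A) * (B - x)) / ((B - A) * x) ^ 2
          = (2 * Real.sqrt (A * B) * Real.sqrt ((x - A) * (B - x)) / ((B - A) * x)) ^ 2 by
        rw [div_pow, mul_pow, mul_pow, Real.sq_sqrt hq.le, mul_pow, Real.sq_sqrt hP.le]; norm_num]
      rw [Real.sqrt_sq (by positivity)]
      field_simp
    have := (h1.add h2).sub h3
    refine this.congr_deriv (Eq.symm ?_)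
    field_simp
    linear_combination 2 * hS
  have hint : IntervalIntegrable (fun x => Real.sqrt ((x - A) * (B - x)) / x) volume A B := by
    apply ContinuousOn.intervalIntegrable
    apply ContinuousOn.div
    · exact (Real.continuous_sqrt.comp (by fun_prop)).continuousOn
    · fun_prop
    · intro x hx
      rw [Set.uIcc_of_le hAB.le] at hx
      exact ne_of_gt (lt_of_lt_of_le hA hx.1)
  rw [intervalIntegral.integral_eq_sub_of_hasDerivAt_of_le hAB.le hcont hderiv hint]
  have e1 : ((B : ℝ) - A) * (B - B) = 0 := by ring
  have e2 : ((A : ℝ) - A) * (B - A) = 0 := by ring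
  have a1 : (2 * B - (A + B)) / (B - A) = 1 := by
    rw [div_eq_one_iff_eq hr0.ne']; ring
  have a2 : (2 * A - (A + B)) / (B - A) = -1 := by
    rw [div_eq_iff hr0.ne']; ring
  have a3 : ((A + B) * B - 2 * (A * B)) / ((B - A) * B) = 1 := by
    rw [div_eq_one_iff_eq (by positivity)]; ring
  have a4 : ((A + B) * A - 2 * (A * B)) / ((B - A) * A) = -1 := by
    rw [div_eq_iff (by positivity)]; ring
  simp only [hF, e1, e2, a1, a2, a3, a4, Real.sqrt_zero, Real.arcsin_one, Real.arcsin_neg_one]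
  ring


section Density
variable {c : ℝ} (hc0 : 0 < c) (hc1 : c < 1)

lemma sqc_lt_one (hc0 : 0 < c) (hc1 : c < 1) : Real.sqrt c < 1 := by
  nlinarith [Real.sq_sqrt hc0.le, Real.sqrt_nonneg c]

lemma mpa_pos (hc0 : 0 < c) (hc1 : c < 1) : 0 < (1 - Real.sqrt c) ^ 2 := by
  have h := sqc_lt_one hc0 hc1
  have h2 : 0 < 1 - Real.sqrt c := by linarith
  positivity

lemma mpa_lt_b (hc0 : 0 < c) (hc1 : c < 1) :
    (1 - Real.sqrt c) ^ 2 < (1 + Real.sqrt c) ^ 2 := by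
  have h : 0 < Real.sqrt c := Real.sqrt_pos.mpr hc0
  nlinarith

lemma mpDensity_zero_of_not_mem (x : ℝ)
    (hx : x ∉ Icc ((1 - Real.sqrt c) ^ 2) ((1 + Real.sqrt c) ^ 2)) : mpDensity c x = 0 := by
  rw [Set.mem_Icc, not_and_or] at hx
  rcases hx with h | h
  · push_neg at h
    rw [mpDensity, show max (x - (1 - Real.sqrt c) ^ 2) 0 = 0 from max_eq_right (by linarith),
      zero_mul, Real.sqrt_zero, zero_div]
  · push_neg at h
    rw [mpDensity, show max ((1 + Real.sqrt c) ^ 2 - x) 0 = 0 from max_eq_right (by linarith),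
      mul_zero, Real.sqrt_zero, zero_div]

lemma mpDensity_integral (hc0 : 0 < c) (hc1 : c < 1) :
    ∫ x, mpDensity c x = 1 := by
  set A := (1 - Real.sqrt c) ^ 2 with hA
  set B := (1 + Real.sqrt c) ^ 2 with hB
  have hA0 : 0 < A := mpa_pos hc0 hc1
  have hAB : A < B := mpa_lt_b hc0 hc1
  have h1 : ∫ x, mpDensity c x = ∫ x in Icc A B, mpDensity c x :=
    (setIntegral_eq_integral_of_forall_compl_eq_zero
      (fun x hx => mpDensity_zero_of_not_mem x hx)).symm
  rw [h1, integral_Icc_eq_integral_Ioc, ← intervalIntegral.integral_of_le hAB.le]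
  have h2 : ∫ x in A..B, mpDensity c x
      = ∫ x in A..B, (2 * π * c)⁻¹ * (Real.sqrt ((x - A) * (B - x)) / x) := by
    apply intervalIntegral.integral_congr
    intro x hx
    rw [Set.uIcc_of_le hAB.le] at hx
    have hx0 : 0 < x := lt_of_lt_of_le hA0 hx.1
    have hπ := Real.pi_pos
    simp only [mpDensity]
    rw [← hA, ← hB]
    rw [max_eq_left (by linarith [hx.1]), max_eq_left (by linarith [hx.2])]
    field_simp
  rw [h2, intervalIntegral.integral_const_mul, keyIntegral A B hA0 hAB]
  have hab : A + B = 2 * (1 + c) := by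
    rw [hA, hB]; have := Real.sq_sqrt hc0.le; nlinarith
  have hprod : Real.sqrt (A * B) = 1 - c := by
    rw [hA, hB, show (1 - Real.sqrt c) ^ 2 * (1 + Real.sqrt c) ^ 2
        = ((1 - Real.sqrt c) * (1 + Real.sqrt c)) ^ 2 by ring]
    rw [Real.sqrt_sq_eq_abs, abs_of_pos]
    · have := Real.sq_sqrt hc0.le; nlinarith
    · have h := sqc_lt_one hc0 hc1
      have := Real.sq_sqrt hc0.le
      have := Real.sqrt_nonneg c
      nlinarith
  rw [hab, hprod]
  have hπ := Real.pi_pos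
  field_simp
  ring

lemma mpDensity_nonneg (hc0 : 0 < c) (x : ℝ) : 0 ≤ mpDensity c x := by
  rcases le_or_gt x 0 with h | h
  · rcases lt_or_eq_of_le h with h' | h'
    · rw [mpDensity, max_eq_right, zero_mul, Real.sqrt_zero, zero_div]
      nlinarith [Real.sqrt_nonneg c, sq_nonneg (1 - Real.sqrt c)]
    · rw [mpDensity, h']
      simp
  · rw [mpDensity]
    have := Real.pi_pos
    positivity

lemma mpDensity_integrable (hc0 : 0 < c) (hc1 : c < 1) :
    Integrable (mpDensity c) volume := by
  set A := (1 - Real.sqrt c) ^ 2 with hA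
  set B := (1 + Real.sqrt c) ^ 2 with hB
  have hA0 : 0 < A := mpa_pos hc0 hc1
  have hcont : ContinuousOn (mpDensity c) (Icc A B) := by
    apply ContinuousOn.div
    · exact (Real.continuous_sqrt.comp (by fun_prop)).continuousOn
    · fun_prop
    · intro x hx
      have h0 : 0 < x := lt_of_lt_of_le hA0 hx.1
      have := Real.pi_pos
      positivity
  have hsupp : Function.support (mpDensity c) ⊆ Icc A B := by
    intro x hx
    by_contra h
    exact hx (mpDensity_zero_of_not_mem x h)
  exact (integrableOn_iff_integrable_of_support_subset hsupp).mp
    (hcont.integrableOn_compact isCompact_Icc)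

lemma mpMeasure_univ (hc0 : 0 < c) (hc1 : c < 1) : mpMeasure c Set.univ = 1 := by
  rw [mpMeasure, withDensity_apply _ MeasurableSet.univ, Measure.restrict_univ]
  have hnn : 0 ≤ᵐ[volume.restrict (Ioi (0:ℝ))] mpDensity c :=
    Filter.Eventually.of_forall (mpDensity_nonneg hc0)
  rw [← ofReal_integral_eq_lintegral_ofReal
    ((mpDensity_integrable hc0 hc1).integrableOn) hnn]
  have : ∫ x in Ioi (0:ℝ), mpDensity c x = ∫ x, mpDensity c x := by
    apply setIntegral_eq_integral_of_forall_compl_eq_zero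
    intro x hx
    simp only [Set.mem_Ioi, not_lt] at hx
    apply mpDensity_zero_of_not_mem
    intro hmem
    have := hmem.1
    have := mpa_pos hc0 hc1
    linarith
  rw [this, mpDensity_integral hc0 hc1]
  simp



lemma mpMeasure_isProb (hc0 : 0 < c) (hc1 : c < 1) : IsProbabilityMeasure (mpMeasure c) :=
  ⟨mpMeasure_univ hc0 hc1⟩

lemma mpMeasure_ae_pos (c : ℝ) : ∀ᵐ x ∂(mpMeasure c), 0 < x := by
  have h : ∀ᵐ x ∂(volume.restrict (Ioi (0:ℝ))), 0 < x := ae_restrict_mem measurableSet_Ioi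
  exact (withDensity_absolutelyContinuous _ _).ae_le h

end Density

lemma integral_cauchy_schwarz (μ : Measure ℝ) (g h : ℝ → ℝ)
    (hgm : AEStronglyMeasurable g μ) (hhm : AEStronglyMeasurable h μ)
    (hg2 : Integrable (fun x => g x ^ 2) μ) (hh2 : Integrable (fun x => h x ^ 2) μ) :
    (∫ x, g x * h x ∂μ) ^ 2 ≤ (∫ x, g x ^ 2 ∂μ) * (∫ x, h x ^ 2 ∂μ) := by
  have hgh : Integrable (fun x => g x * h x) μ := by
    apply Integrable.mono' (hg2.add hh2) (hgm.mul hhm)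
    apply Filter.Eventually.of_forall
    intro x
    simp only [Pi.add_apply, Pi.mul_apply, Real.norm_eq_abs, abs_mul]
    nlinarith [sq_nonneg (|g x| - |h x|), sq_abs (g x), sq_abs (h x), abs_nonneg (g x),
      abs_nonneg (h x)]
  have key : ∀ t : ℝ, 0 ≤ (∫ x, g x ^ 2 ∂μ) * (t * t) + (2 * ∫ x, g x * h x ∂μ) * t
      + (∫ x, h x ^ 2 ∂μ) := by
    intro t
    have expand : ∀ x, (t * g x + h x) ^ 2
        = t ^ 2 * g x ^ 2 + (2 * t) * (g x * h x) + h x ^ 2 := by intro x; ring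
    have hInt : Integrable (fun x => (t * g x + h x) ^ 2) μ := by
      simp only [expand]
      exact (((hg2.const_mul _).add (hgh.const_mul _)).add hh2)
    have h0 : 0 ≤ ∫ x, (t * g x + h x) ^ 2 ∂μ :=
      integral_nonneg fun x => sq_nonneg _
    have i1 : Integrable (fun x => t ^ 2 * g x ^ 2) μ := hg2.const_mul _
    have i2 : Integrable (fun x => 2 * t * (g x * h x)) μ := hgh.const_mul _
    have i12 : Integrable (fun x => t ^ 2 * g x ^ 2 + 2 * t * (g x * h x)) μ := i1.add i2
    calc (0:ℝ) ≤ ∫ x, (t * g x + h x) ^ 2 ∂μ := h0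
      _ = t ^ 2 * (∫ x, g x ^ 2 ∂μ) + (2 * t) * (∫ x, g x * h x ∂μ) + ∫ x, h x ^ 2 ∂μ := by
          simp only [expand]
          rw [integral_add i12 hh2, integral_add i1 i2,
            integral_const_mul, integral_const_mul]
      _ = (∫ x, g x ^ 2 ∂μ) * (t * t) + (2 * ∫ x, g x * h x ∂μ) * t + ∫ x, h x ^ 2 ∂μ := by
          ring
  have hd := discrim_le_zero key
  rw [discrim] at hd
  nlinarith [hd]


lemma integrable_of_ae_bound {μ : Measure ℝ} [IsFiniteMeasure μ] {g : ℝ → ℝ} (C : ℝ)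
    (hm : AEStronglyMeasurable g μ) (hb : ∀ᵐ x ∂μ, ‖g x‖ ≤ C) : Integrable g μ :=
  Integrable.mono' (integrable_const C) hm hb

lemma integral_pos_of_ae_pos {μ : Measure ℝ} [IsProbabilityMeasure μ] {g : ℝ → ℝ}
    (hg : Integrable g μ) (hpos : ∀ᵐ x ∂μ, 0 < g x) : 0 < ∫ x, g x ∂μ := by
  rw [integral_pos_iff_support_of_nonneg_ae (hpos.mono fun x h => h.le) hg]
  have h1 : ∀ᵐ x ∂μ, x ∈ Function.support g := hpos.mono fun x h => ne_of_gt h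
  have h2 : μ (Function.support g) = 1 := by
    rw [measure_congr (MeasureTheory.ae_eq_univ.mpr ?_), measure_univ]
    rw [MeasureTheory.ae_iff] at h1
    convert h1 using 2
    rfl
  rw [h2]
  norm_num

theorem stmt0 (γ σ : ℝ) (hγ : 1 < γ) (hσ : 0 ≤ σ)
    (c : ℝ) (hc : c = 1 / γ)
    (ρ : ℝ) (hρ : ρ = (1 - 2 / π + σ ^ 2) / ((2 / π) * γ))
    (m : ℝ) (hm : m = ∫ x, x / (x + ρ) ∂mpMeasure c)
    (f : ℝ → ℝ) (hmeas : Measurable f) (hpos : ∀ x > 0, 0 < f x)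
    (hint1 : Integrable (fun x => x * f (Real.sqrt x) ^ 2) (mpMeasure c))
    (hint2 : Integrable (fun x => f (Real.sqrt x) ^ 2) (mpMeasure c))
    (α : ℝ) (hα : 0 < α) :
    SNR c ρ (fun x => Real.sqrt α * x / (x ^ 2 + ρ)) = m / (1 - m) ∧
      SNR c ρ f ≤ SNR c ρ (fun x => Real.sqrt α * x / (x ^ 2 + ρ)) := by
  have hγ0 : (0:ℝ) < γ := by linarith
  have hc0 : 0 < c := by rw [hc]; positivity
  have hc1 : c < 1 := by rw [hc, div_lt_one hγ0]; linarith
  have hπ2 : (2:ℝ) < π := by linarith [Real.pi_gt_three]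
  have hπ0 : (0:ℝ) < π := by linarith
  have hρ0 : 0 < ρ := by
    rw [hρ]
    apply div_pos
    · have h2 : 2 / π < 1 := (div_lt_one hπ0).mpr hπ2
      nlinarith [sq_nonneg σ]
    · positivity
  haveI hprob : IsProbabilityMeasure (mpMeasure c) := mpMeasure_isProb hc0 hc1
  have hae : ∀ᵐ x ∂(mpMeasure c), 0 < x := mpMeasure_ae_pos c
  -- basic integrable bounded functions
  have hwmeas : Measurable (fun x : ℝ => x / (x + ρ)) :=
    measurable_id.div (measurable_id.add_const ρ)
  have hvmeas : Measurable (fun x : ℝ => x / (x + ρ) ^ 2) :=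
    measurable_id.div ((measurable_id.add_const ρ).pow_const 2)
  have hwle : ∀ x : ℝ, 0 < x → x / (x + ρ) ≤ 1 := fun x hx => by
    rw [div_le_one (by linarith)]; linarith
  have hwpos : ∀ x : ℝ, 0 < x → 0 < x / (x + ρ) := fun x hx => by positivity
  have hw_int : Integrable (fun x : ℝ => x / (x + ρ)) (mpMeasure c) :=
    integrable_of_ae_bound 1 hwmeas.aestronglyMeasurable
      (hae.mono fun x hx => by
        rw [Real.norm_eq_abs, abs_of_pos (hwpos x hx)]; exact hwle x hx)
  have hw2_int : Integrable (fun x : ℝ => (x / (x + ρ)) ^ 2) (mpMeasure c) :=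
    integrable_of_ae_bound 1 (hwmeas.pow_const 2).aestronglyMeasurable
      (hae.mono fun x hx => by
        rw [Real.norm_eq_abs, abs_of_nonneg (sq_nonneg _)]
        exact pow_le_one₀ (hwpos x hx).le (hwle x hx))
  have hv_int : Integrable (fun x : ℝ => x / (x + ρ) ^ 2) (mpMeasure c) :=
    integrable_of_ae_bound (1/ρ) hvmeas.aestronglyMeasurable
      (hae.mono fun x hx => by
        rw [Real.norm_eq_abs, abs_of_nonneg (by positivity)]
        rw [div_le_div_iff₀ (by positivity) hρ0]
        nlinarith)
  -- m facts
  have hm_pos : 0 < m := by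
    rw [hm]
    exact integral_pos_of_ae_pos hw_int (hae.mono fun x hx => hwpos x hx)
  have hm_lt : m < 1 := by
    have h1 : ∫ x, (1 - x / (x + ρ)) ∂(mpMeasure c) = 1 - m := by
      rw [integral_sub (integrable_const 1) hw_int, ← hm]
      simp
    have h2 : 0 < ∫ x, (1 - x / (x + ρ)) ∂(mpMeasure c) :=
      integral_pos_of_ae_pos ((integrable_const 1).sub hw_int)
        (hae.mono fun x hx => by
          have : x / (x + ρ) < 1 := by rw [div_lt_one (by linarith)]; linarith
          linarith)
    linarith [h1 ▸ h2]
  -- f side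
  have hsqm : Measurable (fun x : ℝ => Real.sqrt x) := Real.continuous_sqrt.measurable
  have hfc : Measurable (fun x : ℝ => f (Real.sqrt x)) := hmeas.comp hsqm
  have hg_meas : Measurable (fun x : ℝ => Real.sqrt x * f (Real.sqrt x)) := hsqm.mul hfc
  have hg2_ae : (fun x => (Real.sqrt x * f (Real.sqrt x)) ^ 2)
      =ᵐ[mpMeasure c] fun x => x * f (Real.sqrt x) ^ 2 :=
    hae.mono fun x hx => by dsimp only; rw [mul_pow, Real.sq_sqrt hx.le]
  have hg2_val : ∫ x, (Real.sqrt x * f (Real.sqrt x)) ^ 2 ∂(mpMeasure c)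
      = ∫ x, x * f (Real.sqrt x) ^ 2 ∂(mpMeasure c) := integral_congr_ae hg2_ae
  -- Cauchy-Schwarz
  have hq1_meas : Measurable (fun x : ℝ => Real.sqrt (x / (x + ρ))) := hsqm.comp hwmeas
  have hq2_meas : Measurable (fun x : ℝ => Real.sqrt (x + ρ) * f (Real.sqrt x)) :=
    (hsqm.comp (measurable_id.add_const ρ)).mul hfc
  have hq1_sq : (fun x => (Real.sqrt (x / (x + ρ))) ^ 2)
      =ᵐ[mpMeasure c] fun x : ℝ => x / (x + ρ) :=
    hae.mono fun x hx => Real.sq_sqrt (by positivity)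
  have hq2_sq : (fun x => (Real.sqrt (x + ρ) * f (Real.sqrt x)) ^ 2)
      =ᵐ[mpMeasure c] fun x => x * f (Real.sqrt x) ^ 2 + ρ * f (Real.sqrt x) ^ 2 :=
    hae.mono fun x hx => by
      dsimp only
      rw [mul_pow, Real.sq_sqrt (by linarith : (0:ℝ) ≤ x + ρ)]; ring
  have hi12 : Integrable (fun x => x * f (Real.sqrt x) ^ 2 + ρ * f (Real.sqrt x) ^ 2)
      (mpMeasure c) := hint1.add (hint2.const_mul ρ)
  have hq12 : (fun x => Real.sqrt (x / (x + ρ)) * (Real.sqrt (x + ρ) * f (Real.sqrt x)))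
      =ᵐ[mpMeasure c] fun x => Real.sqrt x * f (Real.sqrt x) :=
    hae.mono fun x hx => by
      dsimp only
      rw [← mul_assoc, ← Real.sqrt_mul (by positivity) (x + ρ),
        div_mul_cancel₀ _ (by positivity : x + ρ ≠ 0)]
  have hCS := integral_cauchy_schwarz (mpMeasure c) _ _ hq1_meas.aestronglyMeasurable
    hq2_meas.aestronglyMeasurable (hw_int.congr hq1_sq.symm) (hi12.congr hq2_sq.symm)
  rw [integral_congr_ae hq12, integral_congr_ae hq1_sq, integral_congr_ae hq2_sq,
    integral_add hint1 (hint2.const_mul ρ), integral_const_mul] at hCS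
  set A : ℝ := ∫ x, Real.sqrt x * f (Real.sqrt x) ∂(mpMeasure c) with hA
  set B : ℝ := (∫ x, x * f (Real.sqrt x) ^ 2 ∂(mpMeasure c))
      + ρ * ∫ x, f (Real.sqrt x) ^ 2 ∂(mpMeasure c) with hB
  have hA2 : A ^ 2 ≤ m * B := by rw [hm]; exact hCS
  have hB_pos : 0 < B := by
    rw [hB, ← integral_const_mul, ← integral_add hint1 (hint2.const_mul ρ)]
    apply integral_pos_of_ae_pos hi12
    refine hae.mono fun x hx => ?_
    have hf2 : 0 < f (Real.sqrt x) ^ 2 :=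
      pow_pos (hpos _ (Real.sqrt_pos.mpr hx)) 2
    nlinarith
  have hden : 0 < B - A ^ 2 := by nlinarith
  -- the optimal f
  have hαs : Real.sqrt α ^ 2 = α := Real.sq_sqrt hα.le
  have hs1 : ∀ x : ℝ, 0 < x →
      Real.sqrt x * (Real.sqrt α * Real.sqrt x / (Real.sqrt x ^ 2 + ρ))
        = Real.sqrt α * (x / (x + ρ)) := by
    intro x hx
    have hxx : Real.sqrt x * Real.sqrt x = x := Real.mul_self_sqrt hx.le
    rw [Real.sq_sqrt hx.le]
    field_simp
    linear_combination hxx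
  have hs3 : ∀ x : ℝ, 0 < x →
      (Real.sqrt α * Real.sqrt x / (Real.sqrt x ^ 2 + ρ)) ^ 2
        = α * (x / (x + ρ) ^ 2) := by
    intro x hx
    rw [Real.sq_sqrt hx.le, div_pow, mul_pow, hαs, Real.sq_sqrt hx.le]
    ring
  have hI1 : ∫ x, Real.sqrt x * (Real.sqrt α * Real.sqrt x / (Real.sqrt x ^ 2 + ρ))
      ∂(mpMeasure c) = Real.sqrt α * m := by
    rw [integral_congr_ae (hae.mono fun x hx => hs1 x hx), integral_const_mul, ← hm]
  have hI2 : ∫ x, (Real.sqrt x * (Real.sqrt α * Real.sqrt x / (Real.sqrt x ^ 2 + ρ))) ^ 2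
      ∂(mpMeasure c) = α * ∫ x, (x / (x + ρ)) ^ 2 ∂(mpMeasure c) := by
    have hfs2_ae : (fun x => (Real.sqrt x * (Real.sqrt α * Real.sqrt x / (Real.sqrt x ^ 2 + ρ))) ^ 2)
        =ᵐ[mpMeasure c] fun x => α * (x / (x + ρ)) ^ 2 :=
      hae.mono fun x hx => by dsimp only; rw [hs1 x hx, mul_pow, hαs]
    rw [integral_congr_ae hfs2_ae, integral_const_mul]
  have hI3 : ∫ x, (Real.sqrt α * Real.sqrt x / (Real.sqrt x ^ 2 + ρ)) ^ 2
      ∂(mpMeasure c) = α * ∫ x, x / (x + ρ) ^ 2 ∂(mpMeasure c) := by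
    rw [integral_congr_ae (hae.mono fun x hx => hs3 x hx), integral_const_mul]
  have hkey : (∫ x, (x / (x + ρ)) ^ 2 ∂(mpMeasure c))
      + ρ * ∫ x, x / (x + ρ) ^ 2 ∂(mpMeasure c) = m := by
    rw [← integral_const_mul, ← integral_add hw2_int (hv_int.const_mul ρ), hm]
    apply integral_congr_ae
    refine hae.mono fun x hx => ?_
    dsimp only
    have hne : x + ρ ≠ 0 := by positivity
    field_simp
  have hSNRopt : SNR c ρ (fun x => Real.sqrt α * x / (x ^ 2 + ρ)) = m / (1 - m) := by
    show (∫ x, Real.sqrt x * (Real.sqrt α * Real.sqrt x / (Real.sqrt x ^ 2 + ρ)) ∂mpMeasure c) ^ 2 /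
      (((∫ x, (Real.sqrt x * (Real.sqrt α * Real.sqrt x / (Real.sqrt x ^ 2 + ρ))) ^ 2 ∂mpMeasure c) -
        (∫ x, Real.sqrt x * (Real.sqrt α * Real.sqrt x / (Real.sqrt x ^ 2 + ρ)) ∂mpMeasure c) ^ 2) +
      ρ * ∫ x, (Real.sqrt α * Real.sqrt x / (Real.sqrt x ^ 2 + ρ)) ^ 2 ∂mpMeasure c) = m / (1 - m)
    rw [hI1, hI2, hI3]
    rw [show (Real.sqrt α * m) ^ 2 = α * m ^ 2 by rw [mul_pow, hαs]]
    rw [show α * (∫ x, (x / (x + ρ)) ^ 2 ∂(mpMeasure c)) - α * m ^ 2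
        + ρ * (α * ∫ x, x / (x + ρ) ^ 2 ∂(mpMeasure c)) = α * (m * (1 - m)) by
      linear_combination α * hkey]
    rw [show α * m ^ 2 = α * (m * m) by ring, mul_div_mul_left _ _ (ne_of_gt hα),
      mul_div_mul_left _ _ (ne_of_gt hm_pos)]
  refine ⟨hSNRopt, ?_⟩
  rw [hSNRopt]
  have hSNRf : SNR c ρ f = A ^ 2 / (B - A ^ 2) := by
    show (∫ x, Real.sqrt x * f (Real.sqrt x) ∂mpMeasure c) ^ 2 /
      (((∫ x, (Real.sqrt x * f (Real.sqrt x)) ^ 2 ∂mpMeasure c) -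
        (∫ x, Real.sqrt x * f (Real.sqrt x) ∂mpMeasure c) ^ 2) +
      ρ * ∫ x, f (Real.sqrt x) ^ 2 ∂mpMeasure c) = A ^ 2 / (B - A ^ 2)
    rw [hg2_val, ← hA, hB]
    congr 1
    ring
  rw [hSNRf, div_le_div_iff₀ hden (by linarith)]
  nlinarith
end

section
/- Let γ > 1, σ ≥ 0, c = 1/γ, ρ* = (1 − 2/π + σ²)/((2/π)γ), and let λ have law μ_c with d = √λ. For the matched-filter choice f(x) = x, the asymptotic SNR equals SNR(f) := (E[d f(d)])² / ( Var[d f(d)] + ρ* E[f(d)²] ) = (2/π)γ / (1 + σ²). -/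
open MeasureTheory Real
open scoped ENNReal NNReal

/- ### Auxiliary lemmas -/

lemma mp_sub1 (m r : ℝ) (f : ℝ → ℝ) :
    r • ∫ u in (-1:ℝ)..1, f (r * u + m) = ∫ x in (m - r)..(m + r), f x := by
  have := intervalIntegral.smul_integral_comp_mul_add (a := (-1:ℝ)) (b := 1) f r m
  rw [this]; norm_num [sub_eq_add_neg, add_comm]

lemma mp_key_congr (m r : ℝ) (hr : 0 < r) (u : ℝ) (hu : u ∈ Set.uIcc (-1:ℝ) 1) :
    Real.sqrt (max ((r*u+m) - (m - r)) 0 * max ((m + r) - (r*u+m)) 0)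
      = r * Real.sqrt (1 - u^2) := by
  rw [Set.uIcc_of_le (by norm_num)] at hu
  obtain ⟨h1, h2⟩ := hu
  have e1 : max ((r*u+m) - (m - r)) 0 = r * (u + 1) := by
    rw [max_eq_left (by nlinarith)]; ring
  have e2 : max ((m + r) - (r*u+m)) 0 = r * (1 - u) := by
    rw [max_eq_left (by nlinarith)]; ring
  rw [e1, e2]
  have : r * (u + 1) * (r * (1 - u)) = r^2 * (1 - u^2) := by ring
  rw [this, Real.sqrt_mul (sq_nonneg r), Real.sqrt_sq hr.le]

lemma mp_I1 (m r : ℝ) (hr : 0 < r) :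
    ∫ x in (m - r)..(m + r), Real.sqrt (max (x - (m - r)) 0 * max ((m + r) - x) 0)
      = π * r^2 / 2 := by
  rw [← mp_sub1 m r]
  rw [intervalIntegral.integral_congr (g := fun u => r * Real.sqrt (1 - u^2))
    (fun u hu => mp_key_congr m r hr u hu)]
  rw [intervalIntegral.integral_const_mul, integral_sqrt_one_sub_sq]
  simp [smul_eq_mul]; ring

lemma mp_odd_int : ∫ u in (-1:ℝ)..1, u * Real.sqrt (1 - u^2) = 0 := by
  have h := intervalIntegral.integral_comp_neg (a := (-1:ℝ)) (b := 1)
    (fun u => u * Real.sqrt (1 - u^2))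
  simp only [neg_neg, neg_one_mul] at h
  have h2 : ∫ x in (-1:ℝ)..1, -x * Real.sqrt (1 - (-x)^2)
      = ∫ x in (-1:ℝ)..1, -(x * Real.sqrt (1 - x^2)) := by
    congr 1; funext x; ring_nf
  rw [h2, intervalIntegral.integral_neg] at h
  linarith

lemma mp_I2 (m r : ℝ) (hr : 0 < r) :
    ∫ x in (m - r)..(m + r), x * Real.sqrt (max (x - (m - r)) 0 * max ((m + r) - x) 0)
      = m * (π * r^2 / 2) := by
  rw [← mp_sub1 m r (fun x => x * Real.sqrt (max (x - (m - r)) 0 * max ((m + r) - x) 0))]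
  rw [intervalIntegral.integral_congr
    (g := fun u => (r * r) * (u * Real.sqrt (1 - u^2)) + (m * r) * Real.sqrt (1 - u^2))
    (fun u hu => by rw [mp_key_congr m r hr u hu]; ring)]
  have c1 : Continuous fun u : ℝ => (r * r) * (u * Real.sqrt (1 - u^2)) := by continuity
  have c2 : Continuous fun u : ℝ => (m * r) * Real.sqrt (1 - u^2) := by continuity
  rw [intervalIntegral.integral_add (c1.intervalIntegrable _ _) (c2.intervalIntegrable _ _),
    intervalIntegral.integral_const_mul, intervalIntegral.integral_const_mul,
    mp_odd_int, integral_sqrt_one_sub_sq]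
  simp [smul_eq_mul]; ring

lemma mpDensity_meas (c : ℝ) : Measurable (mpDensity c) := by
  unfold mpDensity
  fun_prop

lemma mp_integral (c : ℝ) (hc0 : 0 < c) (hc1 : c < 1) (g : ℝ → ℝ) :
    ∫ x, g x ∂mpMeasure c
      = ∫ x in ((1 - Real.sqrt c)^2)..((1 + Real.sqrt c)^2), mpDensity c x * g x := by
  set s := Real.sqrt c with hs
  have hs0 : 0 < s := Real.sqrt_pos.2 hc0
  have hs1 : s < 1 := by
    rw [hs, show (1:ℝ) = Real.sqrt 1 by simp]
    exact Real.sqrt_lt_sqrt hc0.le hc1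
  have ha : 0 < (1 - s)^2 := by nlinarith
  have hab : (1 - s)^2 ≤ (1 + s)^2 := by nlinarith
  have hcoe : (fun x => ENNReal.ofReal (mpDensity c x))
      = fun x => ((mpDensity c x).toNNReal : ℝ≥0∞) := rfl
  rw [mpMeasure, hcoe,
    integral_withDensity_eq_integral_smul ((mpDensity_meas c).real_toNNReal) g]
  have key : (Set.Ioi (0:ℝ)).indicator (fun x => (mpDensity c x).toNNReal • g x)
      = (Set.Ioc ((1-s)^2) ((1+s)^2)).indicator (fun x => mpDensity c x * g x) := by
    funext x
    by_cases hx : x ∈ Set.Ioc ((1-s)^2) ((1+s)^2)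
    · have hx0 : 0 < x := lt_trans ha hx.1
      have hd : 0 ≤ mpDensity c x := by
        unfold mpDensity
        apply div_nonneg (Real.sqrt_nonneg _)
        positivity
      rw [Set.indicator_of_mem hx, Set.indicator_of_mem (Set.mem_Ioi.2 hx0)]
      simp [NNReal.smul_def, Real.coe_toNNReal _ hd]
    · rw [Set.indicator_of_notMem hx]
      by_cases hx0 : x ∈ Set.Ioi (0:ℝ)
      · rw [Set.indicator_of_mem hx0]
        have hzero : mpDensity c x = 0 := by
          unfold mpDensity
          rcases lt_or_ge ((1-s)^2) x with hxa | hxa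
          · have hxb : (1+s)^2 < x := by
              by_contra hb
              exact hx ⟨hxa, not_lt.1 hb⟩
            rw [show max ((1+s)^2 - x) 0 = 0 from max_eq_right (by linarith)]
            simp
          · rw [show max (x - (1-s)^2) 0 = 0 from max_eq_right (by linarith)]
            simp
        simp [hzero]
      · rw [Set.indicator_of_notMem hx0]
  rw [← integral_indicator measurableSet_Ioi, key,
    integral_indicator measurableSet_Ioc,
    intervalIntegral.integral_of_le hab]

lemma mp_moment1 (c : ℝ) (hc0 : 0 < c) (hc1 : c < 1) (g : ℝ → ℝ)
    (hg : ∀ x, 0 < x → g x = x) : ∫ x, g x ∂mpMeasure c = 1 := by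
  rw [mp_integral c hc0 hc1 g]
  set s := Real.sqrt c with hs
  have hs0 : 0 < s := Real.sqrt_pos.2 hc0
  have hs1 : s < 1 := by
    rw [hs, show (1:ℝ) = Real.sqrt 1 by simp]
    exact Real.sqrt_lt_sqrt hc0.le hc1
  have hs2 : s^2 = c := Real.sq_sqrt hc0.le
  have ha : 0 < (1 - s)^2 := by nlinarith
  have hab : (1 - s)^2 ≤ (1 + s)^2 := by nlinarith
  have hma : (1 - s)^2 = (1 + c) - 2*s := by rw [← hs2]; ring
  have hmb : (1 + s)^2 = (1 + c) + 2*s := by rw [← hs2]; ring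
  have hπ : (0:ℝ) < π := Real.pi_pos
  have congrstep : ∀ x ∈ Set.uIcc ((1-s)^2) ((1+s)^2), mpDensity c x * g x
      = (1/(2*π*c)) * Real.sqrt (max (x - (1-s)^2) 0 * max ((1+s)^2 - x) 0) := by
    intro x hx
    rw [Set.uIcc_of_le hab] at hx
    have hx0 : 0 < x := lt_of_lt_of_le ha hx.1
    rw [hg x hx0, mpDensity]
    field_simp
    rw [← hs]
  rw [intervalIntegral.integral_congr congrstep, intervalIntegral.integral_const_mul,
    hma, hmb, mp_I1 (1 + c) (2*s) (by linarith)]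
  have h4 : (2*s)^2 = 4*c := by rw [← hs2]; ring
  rw [h4]
  field_simp
  ring

lemma mp_moment2 (c : ℝ) (hc0 : 0 < c) (hc1 : c < 1) (g : ℝ → ℝ)
    (hg : ∀ x, 0 < x → g x = x^2) : ∫ x, g x ∂mpMeasure c = 1 + c := by
  rw [mp_integral c hc0 hc1 g]
  set s := Real.sqrt c with hs
  have hs0 : 0 < s := Real.sqrt_pos.2 hc0
  have hs1 : s < 1 := by
    rw [hs, show (1:ℝ) = Real.sqrt 1 by simp]
    exact Real.sqrt_lt_sqrt hc0.le hc1
  have hs2 : s^2 = c := Real.sq_sqrt hc0.le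
  have ha : 0 < (1 - s)^2 := by nlinarith
  have hab : (1 - s)^2 ≤ (1 + s)^2 := by nlinarith
  have hma : (1 - s)^2 = (1 + c) - 2*s := by rw [← hs2]; ring
  have hmb : (1 + s)^2 = (1 + c) + 2*s := by rw [← hs2]; ring
  have hπ : (0:ℝ) < π := Real.pi_pos
  have congrstep : ∀ x ∈ Set.uIcc ((1-s)^2) ((1+s)^2), mpDensity c x * g x
      = (1/(2*π*c)) * (x * Real.sqrt (max (x - (1-s)^2) 0 * max ((1+s)^2 - x) 0)) := by
    intro x hx
    rw [Set.uIcc_of_le hab] at hx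
    have hx0 : 0 < x := lt_of_lt_of_le ha hx.1
    rw [hg x hx0, mpDensity]
    field_simp
    rw [← hs]
  rw [intervalIntegral.integral_congr congrstep, intervalIntegral.integral_const_mul,
    hma, hmb, mp_I2 (1 + c) (2*s) (by linarith)]
  have h4 : (2*s)^2 = 4*c := by rw [← hs2]; ring
  rw [h4]
  field_simp
  try ring
  try exact Or.inl trivial

/-- The asymptotic SNR of the one-bit matched-filter precoder `f(x) = x`. -/
theorem stmt13 (γ σ : ℝ) (hγ : 1 < γ) (hσ : 0 ≤ σ)
    (c : ℝ) (hc : c = 1 / γ)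
    (ρ : ℝ) (hρ : ρ = (1 - 2 / π + σ ^ 2) / ((2 / π) * γ)) :
    SNR c ρ (fun x => x) = (2 / π) * γ / (1 + σ ^ 2) := by
  have hγ0 : (0:ℝ) < γ := by linarith
  have hc0 : 0 < c := by rw [hc]; positivity
  have hc1 : c < 1 := by rw [hc]; rw [div_lt_one hγ0]; linarith
  have hπ : (0:ℝ) < π := Real.pi_pos
  have E1 : ∫ x, Real.sqrt x * Real.sqrt x ∂mpMeasure c = 1 :=
    mp_moment1 c hc0 hc1 _ (fun x hx => Real.mul_self_sqrt hx.le)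
  have E2 : ∫ x, (Real.sqrt x * Real.sqrt x)^2 ∂mpMeasure c = 1 + c :=
    mp_moment2 c hc0 hc1 _ (fun x hx => by rw [Real.mul_self_sqrt hx.le])
  have E3 : ∫ x, (Real.sqrt x)^2 ∂mpMeasure c = 1 :=
    mp_moment1 c hc0 hc1 _ (fun x hx => Real.sq_sqrt hx.le)
  simp only [SNR]
  rw [E1, E2, E3]
  have hsum : c + ρ = (1 + σ^2) / ((2/π) * γ) := by
    rw [hc, hρ]
    field_simp
    ring
  have h1 : (1:ℝ)^2 / ((1 + c - 1^2) + ρ * 1) = 1 / (c + ρ) := by ring_nf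
  rw [h1, hsum, one_div_div]
end
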